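/- arXiv:2410.09974 — 3 statements merged into one kernel-verified Lean document; each statement's English description precedes it below -/
import Mathlib

section
/- Let λ₁ > 0, λ₂ > 0 and μ₂ ≥ 0 with λ₂ ≠ μ₂. For v ≥ 0 and j ≥ 1 set q_j(v) = (λ₂−μ₂)² e^{−(λ₂−μ₂)v} λ₂^{j−1} (1−e^{−(λ₂−μ₂)v})^{j−1} / (λ₂ − μ₂ e^{−(λ₂−μ₂)v})^{j+1} and p_j = λ₁ ∫₀^∞ e^{−λ₁ v} q_j(v) dv. Assume μ₂ > λ₂, or else μ₂ < λ₂ together with 2(λ₂−μ₂) < λ₁. Then Σ_{j≥1} j²·p_j − (Σ_{j≥1} j·p_j)² = ( 2λ₁λ₂/(λ₁ − 2(λ₂−μ₂)) − λ₁(λ₂+μ₂)/(λ₁ − (λ₂−μ₂)) ) / (λ₂−μ₂) − ( λ₁/(λ₁ − (λ₂−μ₂)) )². -/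
open Filter Topology MeasureTheory

/-- `q_j(v)`, the probability that a linear birth-death process with birth rate
`λ₂`, death rate `μ₂` and initial state `1` is in state `j ≥ 1` at time `v`. -/
noncomputable def bdProb (lam2 mu2 : ℝ) (j : ℕ) (v : ℝ) : ℝ :=
  (lam2 - mu2) ^ 2 * Real.exp (-(lam2 - mu2) * v) * lam2 ^ (j - 1) *
    (1 - Real.exp (-(lam2 - mu2) * v)) ^ (j - 1) /
    (lam2 - mu2 * Real.exp (-(lam2 - mu2) * v)) ^ (j + 1)

/-- Limit in-degree distribution of the preferential attachment–detachment
model: `p_j = λ₁ ∫₀^∞ e^(-λ₁ v) q_j(v) dv` for `j ≥ 1`. -/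
noncomputable def limP (lam1 lam2 mu2 : ℝ) (j : ℕ) : ℝ :=
  lam1 * ∫ v in Set.Ioi (0:ℝ), Real.exp (-lam1 * v) * bdProb lam2 mu2 j v

/-!
For fixed `v > 0`, with `a = λ₂ - μ₂`, `x = e^{-av}` and `r = λ₂ (1 - x) / (λ₂ - μ₂ x)`,
one has `q_j(v) = e^{av} (1 - r)² r^{j-1}` with `0 ≤ r < 1`: up to the factor `e^{av} (1 - r)`,
`(q_j(v))_j` is a geometric law on `{1, 2, …}`. Hence `∑ j q_j(v) = e^{av}` and
`∑ j² q_j(v) = e^{av} (1 + r) / (1 - r) = (2λ₂ e^{2av} - (λ₂ + μ₂) e^{av}) / a`.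
All terms are nonnegative, so the sums commute with the Laplace transform defining `p_j`, and
`λ₁ ∫₀^∞ e^{-λ₁ v} e^{bv} dv = λ₁ / (λ₁ - b)` for `b < λ₁` gives both moments.
-/

open Set Real

section Geometric

variable {𝕜 : Type*} [NormedField 𝕜] {r : 𝕜}

lemma hasSum_succ_mul_geometric (hr : ‖r‖ < 1) :
    HasSum (fun n : ℕ => ((n : 𝕜) + 1) * r ^ n) (1 / (1 - r) ^ 2) := by
  simpa using hasSum_choose_mul_geometric_of_norm_lt_one 1 hr

lemma hasSum_succ_sq_mul_geometric (hr : ‖r‖ < 1) :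
    HasSum (fun n : ℕ => ((n : 𝕜) + 1) ^ 2 * r ^ n) ((1 + r) / (1 - r) ^ 3) := by
  have h1r : 1 - r ≠ 0 := sub_ne_zero.2 (ne_of_apply_ne norm (by simpa using hr.ne'))
  have hchoose (n : ℕ) : ((n + 2).choose 2 : 𝕜) * 2 = (n + 2) * (n + 1) := by
    have h : (n + 2).choose 2 * 2 = (n + 2) * (n + 1) := by
      simpa using Nat.choose_succ_right_eq (n + 2) 1
    simpa using congrArg (Nat.cast : ℕ → 𝕜) h
  have hsum := ((hasSum_choose_mul_geometric_of_norm_lt_one 2 hr).mul_left 2).sub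
    (hasSum_succ_mul_geometric hr)
  rw [show 2 * (1 / (1 - r) ^ (2 + 1)) - 1 / (1 - r) ^ 2 = (1 + r) / (1 - r) ^ 3 by
    field_simp; ring] at hsum
  refine hsum.congr_fun fun n => ?_
  linear_combination -r ^ n * hchoose n

end Geometric

lemma hasSum_of_hasSum_succ {G : Type*} [AddCommGroup G] [TopologicalSpace G]
    [IsTopologicalAddGroup G] {f : ℕ → G} {a : G} (h0 : f 0 = 0)
    (h : HasSum (fun n => f (n + 1)) a) : HasSum f a :=
  (hasSum_nat_add_iff' 1).mp (by simpa [h0] using h)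

lemma hasSum_integral_of_nonneg_of_hasSum {α ι : Type*} [MeasurableSpace α] [Countable ι]
    {μ : Measure α} {F : ι → α → ℝ} {f : α → ℝ} (hF_meas : ∀ n, AEStronglyMeasurable (F n) μ)
    (hF_nonneg : ∀ n, 0 ≤ᵐ[μ] F n) (hF_sum : ∀ᵐ a ∂μ, HasSum (fun n => F n a) (f a))
    (hf : Integrable f μ) :
    HasSum (fun n => ∫ a, F n a ∂μ) (∫ a, f a ∂μ) :=
  hasSum_integral_of_dominated_convergence F hF_meas
    (fun n => (hF_nonneg n).mono fun _ ha => (Real.norm_of_nonneg ha).le)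
    (hF_sum.mono fun _ h => h.summable) (hf.congr (hF_sum.mono fun _ h => h.tsum_eq.symm))
    hF_sum

lemma integrableOn_exp_neg_mul_mul_exp {b c : ℝ} (h : b < c) :
    IntegrableOn (fun v => exp (-c * v) * exp (b * v)) (Ioi 0) := by
  simp_rw [← exp_add, ← add_mul]
  exact integrableOn_exp_mul_Ioi (by linarith) 0

lemma integral_exp_neg_mul_mul_exp {b c : ℝ} (h : b < c) :
    ∫ v in Ioi 0, exp (-c * v) * exp (b * v) = 1 / (c - b) := by
  simp_rw [← exp_add, ← add_mul]
  rw [integral_exp_mul_Ioi (by linarith) 0, mul_zero, exp_zero, neg_div, ← div_neg, neg_add,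
    neg_neg, ← sub_eq_add_neg]

lemma mul_one_sub_exp_neg_mul_pos {a v : ℝ} (ha : a ≠ 0) (hv : 0 < v) :
    0 < a * (1 - exp (-a * v)) := by
  rcases ha.lt_or_gt with ha | ha
  · exact mul_pos_of_neg_of_neg ha (sub_neg.2 (one_lt_exp_iff.2 (by nlinarith)))
  · exact mul_pos ha (sub_pos.2 (exp_lt_one_iff.2 (by nlinarith)))

section BirthDeath

variable {lam2 mu2 v : ℝ}

lemma mul_bdDenom_pos (hlam2 : 0 ≤ lam2) (hne : lam2 ≠ mu2) (hv : 0 < v) :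
    0 < (lam2 - mu2) * (lam2 - mu2 * exp (-(lam2 - mu2) * v)) := by
  have hpos := mul_one_sub_exp_neg_mul_pos (sub_ne_zero.2 hne) hv
  have hsq : 0 < (lam2 - mu2) ^ 2 * exp (-(lam2 - mu2) * v) :=
    mul_pos (sq_pos_of_ne_zero (sub_ne_zero.2 hne)) (exp_pos _)
  have hnn := mul_nonneg hlam2 hpos.le
  -- with `a = λ₂ - μ₂` and `x = e^{-av}`: `a (λ₂ - μ₂ x) = a² x + λ₂ · a (1 - x)`
  linear_combination hsq + hnn

lemma bdDenom_ne_zero (hlam2 : 0 ≤ lam2) (hne : lam2 ≠ mu2) (hv : 0 < v) :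
    lam2 - mu2 * exp (-(lam2 - mu2) * v) ≠ 0 :=
  right_ne_zero_of_mul (mul_bdDenom_pos hlam2 hne hv).ne'

noncomputable def bdRatio (lam2 mu2 v : ℝ) : ℝ :=
  lam2 * (1 - exp (-(lam2 - mu2) * v)) / (lam2 - mu2 * exp (-(lam2 - mu2) * v))

lemma one_sub_bdRatio (hD : lam2 - mu2 * exp (-(lam2 - mu2) * v) ≠ 0) :
    1 - bdRatio lam2 mu2 v =
      (lam2 - mu2) * exp (-(lam2 - mu2) * v) / (lam2 - mu2 * exp (-(lam2 - mu2) * v)) := by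
  rw [bdRatio, eq_div_iff hD, sub_mul, div_mul_cancel₀ _ hD]
  ring

lemma bdRatio_nonneg (hlam2 : 0 ≤ lam2) (hne : lam2 ≠ mu2) (hv : 0 < v) :
    0 ≤ bdRatio lam2 mu2 v := by
  rw [bdRatio, ← mul_div_mul_left _ _ (sub_ne_zero.2 hne), mul_left_comm]
  exact div_nonneg (mul_nonneg hlam2 (mul_one_sub_exp_neg_mul_pos (sub_ne_zero.2 hne) hv).le)
    (mul_bdDenom_pos hlam2 hne hv).le

lemma bdRatio_lt_one (hlam2 : 0 ≤ lam2) (hne : lam2 ≠ mu2) (hv : 0 < v) :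
    bdRatio lam2 mu2 v < 1 := by
  rw [← sub_pos, one_sub_bdRatio (bdDenom_ne_zero hlam2 hne hv),
    ← mul_div_mul_left _ _ (sub_ne_zero.2 hne), ← mul_assoc, ← sq]
  exact div_pos (mul_pos (sq_pos_of_ne_zero (sub_ne_zero.2 hne)) (exp_pos _))
    (mul_bdDenom_pos hlam2 hne hv)

lemma norm_bdRatio_lt_one (hlam2 : 0 ≤ lam2) (hne : lam2 ≠ mu2) (hv : 0 < v) :
    ‖bdRatio lam2 mu2 v‖ < 1 := by
  rw [Real.norm_of_nonneg (bdRatio_nonneg hlam2 hne hv)]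
  exact bdRatio_lt_one hlam2 hne hv

lemma bdProb_succ (hD : lam2 - mu2 * exp (-(lam2 - mu2) * v) ≠ 0) (m : ℕ) :
    bdProb lam2 mu2 (m + 1) v =
      exp ((lam2 - mu2) * v) * (1 - bdRatio lam2 mu2 v) ^ 2 * bdRatio lam2 mu2 v ^ m := by
  rw [one_sub_bdRatio hD, bdRatio, bdProb, Nat.add_sub_cancel,
    show (lam2 - mu2) * v = -(-(lam2 - mu2) * v) by ring, exp_neg]
  have hx := (exp_pos (-(lam2 - mu2) * v)).ne'
  generalize exp (-(lam2 - mu2) * v) = x at hD hx ⊢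
  simp only [div_pow, mul_pow]
  field_simp
  ring

lemma bdProb_succ_nonneg (hlam2 : 0 ≤ lam2) (hne : lam2 ≠ mu2) (hv : 0 < v) (m : ℕ) :
    0 ≤ bdProb lam2 mu2 (m + 1) v := by
  rw [bdProb_succ (bdDenom_ne_zero hlam2 hne hv)]
  have := bdRatio_nonneg hlam2 hne hv
  positivity


lemma hasSum_natCast_mul_bdProb (hlam2 : 0 ≤ lam2) (hne : lam2 ≠ mu2) (hv : 0 < v) :
    HasSum (fun j : ℕ => (j : ℝ) * bdProb lam2 mu2 j v) (exp ((lam2 - mu2) * v)) := by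
  have h1r : 1 - bdRatio lam2 mu2 v ≠ 0 := (sub_pos.2 (bdRatio_lt_one hlam2 hne hv)).ne'
  have hsum := (hasSum_succ_mul_geometric (norm_bdRatio_lt_one hlam2 hne hv)).mul_left
    (exp ((lam2 - mu2) * v) * (1 - bdRatio lam2 mu2 v) ^ 2)
  rw [mul_one_div, mul_div_assoc, div_self (pow_ne_zero 2 h1r), mul_one] at hsum
  refine hasSum_of_hasSum_succ (by simp) ?_
  refine hsum.congr_fun fun n => ?_
  rw [bdProb_succ (bdDenom_ne_zero hlam2 hne hv)]
  push_cast
  ring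

lemma hasSum_natCast_sq_mul_bdProb (hlam2 : 0 ≤ lam2) (hne : lam2 ≠ mu2) (hv : 0 < v) :
    HasSum (fun j : ℕ => (j : ℝ) ^ 2 * bdProb lam2 mu2 j v)
      ((2 * lam2 * exp (2 * (lam2 - mu2) * v) - (lam2 + mu2) * exp ((lam2 - mu2) * v)) /
        (lam2 - mu2)) := by
  have hD := bdDenom_ne_zero hlam2 hne hv
  have hsum := (hasSum_succ_sq_mul_geometric (norm_bdRatio_lt_one hlam2 hne hv)).mul_left
    (exp ((lam2 - mu2) * v) * (1 - bdRatio lam2 mu2 v) ^ 2)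
  have hval : exp ((lam2 - mu2) * v) * (1 - bdRatio lam2 mu2 v) ^ 2 *
      ((1 + bdRatio lam2 mu2 v) / (1 - bdRatio lam2 mu2 v) ^ 3) =
      (2 * lam2 * exp (2 * (lam2 - mu2) * v) - (lam2 + mu2) * exp ((lam2 - mu2) * v)) /
        (lam2 - mu2) := by
    rw [show 1 + bdRatio lam2 mu2 v = 2 - (1 - bdRatio lam2 mu2 v) by ring]
    rw [one_sub_bdRatio hD]
    have ha := sub_ne_zero.2 hne
    have hx := (exp_pos (-(lam2 - mu2) * v)).ne'
    rw [show 2 * (lam2 - mu2) * v = -(-(lam2 - mu2) * v) + -(-(lam2 - mu2) * v) by ring,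
      show (lam2 - mu2) * v = -(-(lam2 - mu2) * v) by ring, exp_add, exp_neg]
    generalize exp (-(lam2 - mu2) * v) = x at hD hx ⊢
    rw [mul_comm mu2 x] at hD ⊢
    field_simp
    ring
  rw [hval] at hsum
  refine hasSum_of_hasSum_succ (by simp) ?_
  refine hsum.congr_fun fun n => ?_
  rw [bdProb_succ hD]
  push_cast
  ring

end BirthDeath

section Limit

variable {lam1 lam2 mu2 : ℝ}

lemma continuousOn_bdProb (hlam2 : 0 ≤ lam2) (hne : lam2 ≠ mu2) (j : ℕ) :
    ContinuousOn (bdProb lam2 mu2 j) (Ioi 0) :=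
  (by fun_prop : Continuous _).continuousOn.div (by fun_prop : Continuous _).continuousOn
    fun _ hv => pow_ne_zero _ (bdDenom_ne_zero hlam2 hne hv)

-- `bdProb lam2 mu2 0 v` is not a probability (it can be negative), hence `w 0 = 0`.
lemma hasSum_mul_limP (hlam2 : 0 ≤ lam2) (hne : lam2 ≠ mu2) {w : ℕ → ℝ} (hw0 : w 0 = 0)
    (hw : ∀ j, 0 ≤ w j) {g : ℝ → ℝ}
    (hg : ∀ v, 0 < v → HasSum (fun j => w j * bdProb lam2 mu2 j v) (g v))
    (hgi : IntegrableOn (fun v => exp (-lam1 * v) * g v) (Ioi 0)) :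
    HasSum (fun j => w j * limP lam1 lam2 mu2 j)
      (lam1 * ∫ v in Ioi 0, exp (-lam1 * v) * g v) := by
  set F : ℕ → ℝ → ℝ := fun j v => w j * (exp (-lam1 * v) * bdProb lam2 mu2 j v)
  have hF_meas (j : ℕ) : AEStronglyMeasurable (F j) (volume.restrict (Ioi 0)) :=
    (continuousOn_const.mul ((by fun_prop : Continuous fun v => exp (-lam1 * v)).continuousOn.mul
      (continuousOn_bdProb hlam2 hne j))).aestronglyMeasurable measurableSet_Ioi
  have hF_nonneg (j : ℕ) : 0 ≤ᵐ[volume.restrict (Ioi 0)] F j := by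
    filter_upwards [ae_restrict_mem measurableSet_Ioi] with v hv
    cases j with
    | zero => simp [F, hw0]
    | succ m =>
      exact mul_nonneg (hw _) (mul_nonneg (exp_nonneg _) (bdProb_succ_nonneg hlam2 hne hv m))
  have hF_sum :
      ∀ᵐ v ∂volume.restrict (Ioi 0), HasSum (fun j => F j v) (exp (-lam1 * v) * g v) := by
    filter_upwards [ae_restrict_mem measurableSet_Ioi] with v hv
    simpa only [F, mul_left_comm (w _)] using (hg v hv).mul_left (exp (-lam1 * v))
  have hswap := hasSum_integral_of_nonneg_of_hasSum hF_meas hF_nonneg hF_sum hgi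
  refine (hswap.mul_left lam1).congr_fun fun j => ?_
  simp only [limP, F, integral_const_mul]
  ring

lemma hasSum_natCast_mul_limP (hlam2 : 0 ≤ lam2) (hne : lam2 ≠ mu2) (h1 : lam2 - mu2 < lam1) :
    HasSum (fun j : ℕ => (j : ℝ) * limP lam1 lam2 mu2 j) (lam1 / (lam1 - (lam2 - mu2))) := by
  have h := hasSum_mul_limP hlam2 hne (w := fun j => (j : ℝ)) Nat.cast_zero Nat.cast_nonneg
    (fun _ hv => hasSum_natCast_mul_bdProb hlam2 hne hv) (integrableOn_exp_neg_mul_mul_exp h1)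
  rwa [integral_exp_neg_mul_mul_exp h1, mul_one_div] at h

lemma hasSum_natCast_sq_mul_limP (hlam2 : 0 ≤ lam2) (hne : lam2 ≠ mu2) (h1 : lam2 - mu2 < lam1)
    (h2 : 2 * (lam2 - mu2) < lam1) :
    HasSum (fun j : ℕ => (j : ℝ) ^ 2 * limP lam1 lam2 mu2 j)
      ((2 * lam1 * lam2 / (lam1 - 2 * (lam2 - mu2)) -
        lam1 * (lam2 + mu2) / (lam1 - (lam2 - mu2))) / (lam2 - mu2)) := by
  have hsplit : (fun v => exp (-lam1 * v) *
      ((2 * lam2 * exp (2 * (lam2 - mu2) * v) - (lam2 + mu2) * exp ((lam2 - mu2) * v)) /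
        (lam2 - mu2))) =
      fun v => (2 * lam2 * (exp (-lam1 * v) * exp (2 * (lam2 - mu2) * v)) -
        (lam2 + mu2) * (exp (-lam1 * v) * exp ((lam2 - mu2) * v))) / (lam2 - mu2) := by
    funext v
    ring
  have hi1 := (integrableOn_exp_neg_mul_mul_exp h1).const_mul (lam2 + mu2)
  have hi2 := (integrableOn_exp_neg_mul_mul_exp h2).const_mul (2 * lam2)
  have h := hasSum_mul_limP hlam2 hne (w := fun j => (j : ℝ) ^ 2) (by simp)
    (fun j => by positivity)
    (fun _ hv => hasSum_natCast_sq_mul_bdProb hlam2 hne hv)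
    (by rw [hsplit]; exact (hi2.sub hi1).div_const _)
  rw [hsplit, integral_div, integral_sub hi2 hi1, integral_const_mul, integral_const_mul,
    integral_exp_neg_mul_mul_exp h1, integral_exp_neg_mul_mul_exp h2] at h
  convert h using 1
  ring

end Limit

theorem variance_of_degree_general (lam1 lam2 mu2 : ℝ)
    (hlam1 : 0 < lam1) (hlam2 : 0 < lam2)
    (hcase : lam2 < mu2 ∨ (mu2 < lam2 ∧ 2 * (lam2 - mu2) < lam1)) :
    (∑' j : ℕ, (j : ℝ) ^ 2 * limP lam1 lam2 mu2 j) -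
        (∑' j : ℕ, (j : ℝ) * limP lam1 lam2 mu2 j) ^ 2 =
      (2 * lam1 * lam2 / (lam1 - 2 * (lam2 - mu2)) -
          lam1 * (lam2 + mu2) / (lam1 - (lam2 - mu2))) / (lam2 - mu2) -
        (lam1 / (lam1 - (lam2 - mu2))) ^ 2 := by
  have hne : lam2 ≠ mu2 := by
    rcases hcase with h | h
    exacts [h.ne, h.1.ne']
  have h1 : lam2 - mu2 < lam1 := by rcases hcase with h | h <;> linarith
  have h2 : 2 * (lam2 - mu2) < lam1 := by rcases hcase with h | h <;> linarith
  rw [(hasSum_natCast_sq_mul_limP hlam2.le hne h1 h2).tsum_eq,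
    (hasSum_natCast_mul_limP hlam2.le hne h1).tsum_eq]

/-- Variance of the limit in-degree distribution: if `μ₂ > λ₂`, or
`μ₂ < λ₂` and `2(λ₂-μ₂) < λ₁`, then
`∑_{j≥1} j² p_j - (∑_{j≥1} j p_j)² =
  (2λ₁λ₂/(λ₁-2(λ₂-μ₂)) - λ₁(λ₂+μ₂)/(λ₁-(λ₂-μ₂)))/(λ₂-μ₂) - (λ₁/(λ₁-(λ₂-μ₂)))²`. -/
theorem variance_of_degree (lam1 lam2 mu2 : ℝ)
    (hlam1 : 0 < lam1) (hlam2 : 0 < lam2) (hmu2 : 0 ≤ mu2)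
    (hcase : lam2 < mu2 ∨ (mu2 < lam2 ∧ 2 * (lam2 - mu2) < lam1)) :
    (∑' j : ℕ, (j : ℝ) ^ 2 * limP lam1 lam2 mu2 j) -
        (∑' j : ℕ, (j : ℝ) * limP lam1 lam2 mu2 j) ^ 2 =
      (2 * lam1 * lam2 / (lam1 - 2 * (lam2 - mu2)) -
          lam1 * (lam2 + mu2) / (lam1 - (lam2 - mu2))) / (lam2 - mu2) -
        (lam1 / (lam1 - (lam2 - mu2))) ^ 2 :=
  variance_of_degree_general lam1 lam2 mu2 hlam1 hlam2 hcase
end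

section
/- Let λ₁ > 0, λ₂ > μ₂ > 0, let j ≥ 1 be an integer and set γ = λ₁/(λ₂−μ₂). Then λ₁ ∫₀^∞ e^{−λ₁ v} (λ₂−μ₂)² e^{−(λ₂−μ₂)v} λ₂^{j−1} (1−e^{−(λ₂−μ₂)v})^{j−1} (λ₂ − μ₂ e^{−(λ₂−μ₂)v})^{−(j+1)} dv = (λ₁(λ₂−μ₂)/λ₂²)·B(j, 1+γ)·₂F₁(j+1, 1+γ, j+1+γ, μ₂/λ₂). -/
open Filter Topology MeasureTheory

/-- The Beta function `B(a,b) = ∫₀¹ s^(a-1) (1-s)^(b-1) ds`. -/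
noncomputable def betaFn (a b : ℝ) : ℝ :=
  ∫ s in (0:ℝ)..1, s ^ (a - 1) * (1 - s) ^ (b - 1)

/-- The Gauss hypergeometric function
`₂F₁(a,b,c,z) = (1/B(b,c-b)) ∫₀¹ s^(b-1) (1-s)^(c-b-1) (1-sz)^(-a) ds`. -/
noncomputable def gauss2F1 (a b c z : ℝ) : ℝ :=
  (betaFn b (c - b))⁻¹ * ∫ s in (0:ℝ)..1, s ^ (b - 1) * (1 - s) ^ (c - b - 1) * (1 - s * z) ^ (-a)

lemma betaFn_symm (a b : ℝ) : betaFn a b = betaFn b a := by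
  unfold betaFn
  have h := intervalIntegral.integral_comp_sub_left (a := (0:ℝ)) (b := 1)
      (fun x => x ^ (b - 1) * (1 - x) ^ (a - 1)) 1
  simp only [sub_zero, sub_self] at h
  rw [← h]
  apply intervalIntegral.integral_congr
  intro x _
  simp only [sub_sub_cancel]
  ring

lemma betaFn_pos {a b : ℝ} (ha : 1 ≤ a) (hb : 1 ≤ b) : 0 < betaFn a b := by
  unfold betaFn
  apply intervalIntegral.intervalIntegral_pos_of_pos_on
  · apply Continuous.intervalIntegrable
    exact (Real.continuous_rpow_const (by linarith)).mul
      ((Real.continuous_rpow_const (by linarith)).comp (continuous_const.sub continuous_id))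
  · intro x hx
    exact mul_pos (Real.rpow_pos_of_pos hx.1 _) (Real.rpow_pos_of_pos (by linarith [hx.2]) _)
  · norm_num


/-- Supercritical integral identity: for `γ = λ₁/(λ₂-μ₂)` and `j ≥ 1`,
`λ₁ ∫₀^∞ e^(-λ₁v) (λ₂-μ₂)² e^(-(λ₂-μ₂)v) λ₂^(j-1) (1-e^(-(λ₂-μ₂)v))^(j-1)
  (λ₂-μ₂e^(-(λ₂-μ₂)v))^(-(j+1)) dv
  = (λ₁(λ₂-μ₂)/λ₂²) B(j,1+γ) ₂F₁(j+1, 1+γ, j+1+γ, μ₂/λ₂)`. -/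
theorem supercritical_integral (lam1 lam2 mu2 gam : ℝ)
    (hlam1 : 0 < lam1) (hmu2 : 0 < mu2) (h : mu2 < lam2)
    (hgam : gam = lam1 / (lam2 - mu2)) (j : ℕ) (hj : 1 ≤ j) :
    lam1 * ∫ v in Set.Ioi (0:ℝ),
        Real.exp (-lam1 * v) * (lam2 - mu2) ^ 2 * Real.exp (-(lam2 - mu2) * v) *
          lam2 ^ (j - 1) * (1 - Real.exp (-(lam2 - mu2) * v)) ^ (j - 1) /
          (lam2 - mu2 * Real.exp (-(lam2 - mu2) * v)) ^ (j + 1) =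
      lam1 * (lam2 - mu2) / lam2 ^ 2 * betaFn j (1 + gam) *
        gauss2F1 (j + 1) (1 + gam) (j + 1 + gam) (mu2 / lam2) := by
  set β := lam2 - mu2 with hβdef
  have hβ : 0 < β := by rw [hβdef]; linarith
  have hl2 : 0 < lam2 := lt_trans hmu2 h
  set z := mu2 / lam2 with hzdef
  have hz0 : 0 < z := div_pos hmu2 hl2
  have hz1 : z < 1 := (div_lt_one hl2).mpr h
  have hγ : 0 < gam := by rw [hgam]; exact div_pos hlam1 hβ
  have hγβ : gam * β = lam1 := by rw [hgam]; field_simp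
  set g : ℝ → ℝ := fun s =>
    β / lam2 ^ 2 * (s ^ ((j:ℝ) - 1) * (1 - s) ^ gam * (1 - (1 - s) * z) ^ (-((j:ℝ) + 1)))
    with hgdef
  set φ : ℝ → ℝ := fun v => 1 - Real.exp (-β * v) with hφdef
  set φ' : ℝ → ℝ := fun v => β * Real.exp (-β * v) with hφ'def
  have hderiv : ∀ v ∈ Set.Ioi (0:ℝ), HasDerivWithinAt φ (φ' v) (Set.Ioi 0) v := by
    intro v _
    have h1 : HasDerivAt (fun v : ℝ => -β * v) (-β) v := by
      simpa using (hasDerivAt_id v).const_mul (-β)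
    have h2 := h1.exp
    have h3 := h2.const_sub 1
    have he : -(Real.exp (-β * v) * -β) = β * Real.exp (-β * v) := by ring
    rw [he] at h3
    exact h3.hasDerivWithinAt
  have hinj : Set.InjOn φ (Set.Ioi 0) := by
    intro a _ b _ hab
    have h1 : Real.exp (-β * a) = Real.exp (-β * b) := by
      have : (1:ℝ) - Real.exp (-β * a) = 1 - Real.exp (-β * b) := hab
      linarith
    have h2 : -β * a = -β * b := Real.exp_injective h1
    exact mul_left_cancel₀ (neg_ne_zero.mpr hβ.ne') h2
  have himg : φ '' Set.Ioi 0 = Set.Ioo 0 1 := by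
    ext s
    constructor
    · rintro ⟨v, hv, rfl⟩
      have hv' : (0:ℝ) < v := hv
      have he1 : Real.exp (-β * v) < 1 := Real.exp_lt_one_iff.mpr (by nlinarith)
      have he0 : 0 < Real.exp (-β * v) := Real.exp_pos _
      exact ⟨by show (0:ℝ) < 1 - Real.exp (-β * v); linarith,
             by show (1:ℝ) - Real.exp (-β * v) < 1; linarith⟩
    · rintro ⟨hs0, hs1⟩
      refine ⟨-(Real.log (1 - s)) / β, ?_, ?_⟩
      · have : Real.log (1 - s) < 0 := Real.log_neg (by linarith) (by linarith)
        exact div_pos (by linarith) hβ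
      · show (1:ℝ) - Real.exp (-β * (-(Real.log (1 - s)) / β)) = s
        rw [show -β * (-(Real.log (1 - s)) / β) = Real.log (1 - s) by field_simp]
        rw [Real.exp_log (by linarith)]
        ring
  have key : ∀ v ∈ Set.Ioi (0:ℝ),
      Real.exp (-lam1 * v) * β ^ 2 * Real.exp (-β * v) *
          lam2 ^ (j - 1) * (1 - Real.exp (-β * v)) ^ (j - 1) /
          (lam2 - mu2 * Real.exp (-β * v)) ^ (j + 1)
        = |φ' v| • g (φ v) := by
    intro v hv
    have hv' : (0:ℝ) < v := hv
    set u := Real.exp (-β * v) with hudef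
    have hu0 : 0 < u := Real.exp_pos _
    have hu1 : u < 1 := Real.exp_lt_one_iff.mpr (by nlinarith)
    have hexp1 : Real.exp (-lam1 * v) = u ^ gam := by
      rw [hudef, ← Real.exp_mul]
      congr 1
      rw [← hγβ]; ring
    have hfac : lam2 - mu2 * u = lam2 * (1 - u * z) := by
      rw [hzdef]; field_simp
    have huz : 0 < 1 - u * z := by nlinarith
    have hpow2 : ((1:ℝ) - u * z) ^ (-((j:ℝ) + 1)) = (((1:ℝ) - u * z) ^ (j + 1 : ℕ))⁻¹ := by
      rw [← Real.rpow_natCast (1 - u * z) (j + 1), ← Real.rpow_neg huz.le]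
      push_cast
      ring_nf
    have hpow1 : ((1:ℝ) - u) ^ ((j:ℝ) - 1) = ((1:ℝ) - u) ^ (j - 1 : ℕ) := by
      rw [← Real.rpow_natCast (1 - u) (j - 1)]
      congr 1
      push_cast [Nat.cast_sub hj]
      ring
    have hφv : φ v = 1 - u := rfl
    have hφ'v : φ' v = β * u := rfl
    rw [hφv, hφ'v, hgdef]
    simp only [smul_eq_mul, sub_sub_cancel]
    rw [abs_of_pos (mul_pos hβ hu0)]
    rw [hexp1, hpow1, hpow2, hfac, mul_pow]
    have hl2ne : lam2 ≠ 0 := ne_of_gt hl2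
    have huzne : ((1:ℝ) - u * z) ^ (j + 1 : ℕ) ≠ 0 := pow_ne_zero _ (ne_of_gt huz)
    have hjsplit : lam2 ^ (j + 1 : ℕ) = lam2 ^ (j - 1 : ℕ) * lam2 ^ 2 := by
      rw [← pow_add]
      congr 1
      omega
    rw [hjsplit]
    field_simp
  have step1 : (∫ v in Set.Ioi (0:ℝ),
      Real.exp (-lam1 * v) * β ^ 2 * Real.exp (-β * v) *
        lam2 ^ (j - 1) * (1 - Real.exp (-β * v)) ^ (j - 1) /
        (lam2 - mu2 * Real.exp (-β * v)) ^ (j + 1))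
      = ∫ s in Set.Ioo (0:ℝ) 1, g s := by
    rw [← himg,
      MeasureTheory.integral_image_eq_integral_abs_deriv_smul measurableSet_Ioi hderiv hinj g]
    exact MeasureTheory.setIntegral_congr_fun measurableSet_Ioi key
  have step2 : (∫ s in Set.Ioo (0:ℝ) 1, g s) = ∫ s in (0:ℝ)..1, g s := by
    rw [intervalIntegral.integral_of_le zero_le_one,
      MeasureTheory.integral_Ioc_eq_integral_Ioo]
  set J : ℝ := ∫ t in (0:ℝ)..1, t ^ gam * (1 - t) ^ ((j:ℝ) - 1) * (1 - t * z) ^ (-((j:ℝ) + 1))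
    with hJdef
  have step3 : (∫ s in (0:ℝ)..1, g s) = β / lam2 ^ 2 * J := by
    rw [hgdef, intervalIntegral.integral_const_mul, hJdef]
    congr 1
    have h2 := intervalIntegral.integral_comp_sub_left (a := (0:ℝ)) (b := 1)
      (fun t => t ^ gam * (1 - t) ^ ((j:ℝ) - 1) * (1 - t * z) ^ (-((j:ℝ) + 1))) 1
    simp only [sub_zero, sub_self] at h2
    rw [← h2]
    apply intervalIntegral.integral_congr
    intro x _
    simp only [sub_sub_cancel]
    ring
  have hrhs : gauss2F1 ((j:ℝ) + 1) (1 + gam) ((j:ℝ) + 1 + gam) z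
      = (betaFn (1 + gam) (j:ℝ))⁻¹ * J := by
    unfold gauss2F1
    congr 1
    · congr 1; ring
    · rw [hJdef]
      apply intervalIntegral.integral_congr
      intro x _
      rw [show (1:ℝ) + gam - 1 = gam by ring,
        show (j:ℝ) + 1 + gam - (1 + gam) - 1 = (j:ℝ) - 1 by ring]
  have hbpos : 0 < betaFn (j:ℝ) (1 + gam) :=
    betaFn_pos (by exact_mod_cast hj) (by linarith)
  have hbeta : betaFn (j:ℝ) (1 + gam) * (betaFn (1 + gam) (j:ℝ))⁻¹ = 1 := by
    rw [betaFn_symm (1 + gam) (j:ℝ)]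
    exact mul_inv_cancel₀ hbpos.ne'
  rw [step1, step2, step3, hrhs]
  calc lam1 * (β / lam2 ^ 2 * J)
      = lam1 * β / lam2 ^ 2 *
          (betaFn (j:ℝ) (1 + gam) * (betaFn (1 + gam) (j:ℝ))⁻¹) * J := by
        rw [hbeta]; ring
    _ = lam1 * β / lam2 ^ 2 * betaFn (j:ℝ) (1 + gam) * ((betaFn (1 + gam) (j:ℝ))⁻¹ * J) := by
        ring
end

section
/- Let z > 0 and for each positive integer j set w(j) = arcosh(1 + z/(2j)) and β(j) = (w(j) + sinh(w(j)))/2. Then for every m ∈ ℕ one has lim_{j→∞} j^m · √(β(j)/j) · e^{−2jβ(j)} = 0, while for every ε > 0 one has lim_{j→∞} e^{εj} · √(β(j)/j) · e^{−2jβ(j)} = +∞. -/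
/-!
With `x = z/(2j)` one has `sinh (arcosh (1 + x)) = √(2x + x²)`, so `j · sinh w(j) = √(zj + z²/4)`.
Since `0 ≤ w ≤ sinh w`, the exponent `2jβ(j)` lies between `√z · √j` and `2√(z + z²/4) · √j`,
while `√(β(j)/j)` lies between a constant multiple of `1/j` and a constant. The term is therefore
`exp (-Θ(√j))` up to polynomial factors: it decays faster than every `j^(-m)` but slower than
every `exp (-εj)`.
-/

open Filter Topology

/-- The inverse hyperbolic cosine, `arcosh x = log (x + √(x² - 1))` (for `x ≥ 1`). -/
noncomputable def arcosh (x : ℝ) : ℝ :=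
  Real.log (x + Real.sqrt (x ^ 2 - 1))

/-- `w(j) = arcosh (1 + z/(2j))`. -/
noncomputable def wFn (z : ℝ) (j : ℕ) : ℝ :=
  arcosh (1 + z / (2 * j))

/-- `β(j) = (w(j) + sinh w(j))/2`. -/
noncomputable def betaJ (z : ℝ) (j : ℕ) : ℝ :=
  (wFn z j + Real.sinh (wFn z j)) / 2

open Real hiding arcosh

lemma arcosh_one_add_nonneg {x : ℝ} (hx : 0 ≤ x) : 0 ≤ arcosh (1 + x) :=
  log_nonneg (by linarith [sqrt_nonneg ((1 + x) ^ 2 - 1)])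

lemma sinh_arcosh_one_add {x : ℝ} (hx : 0 ≤ x) :
    sinh (arcosh (1 + x)) = √(2 * x + x ^ 2) := by
  set s := √(2 * x + x ^ 2)
  have hs : s ^ 2 = 2 * x + x ^ 2 := sq_sqrt (by positivity)
  have hpos : 0 < 1 + x + s := by positivity
  -- `1 + x - s` is the reciprocal of `1 + x + s`, since their product is `(1 + x) ^ 2 - s ^ 2 = 1`.
  have hinv : (1 + x + s)⁻¹ = 1 + x - s :=
    inv_eq_of_mul_eq_one_left (by linear_combination -hs)
  rw [arcosh, show (1 + x) ^ 2 - 1 = 2 * x + x ^ 2 by ring, sinh_eq, exp_neg, exp_log hpos, hinv]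
  ring

lemma tendsto_pow_mul_exp_neg_mul_sqrt_atTop_nhds_zero (m : ℕ) {b : ℝ} (hb : 0 < b) :
    Tendsto (fun x : ℝ => x ^ m * exp (-b * √x)) atTop (𝓝 0) := by
  refine ((tendsto_rpow_mul_exp_neg_mul_atTop_nhds_zero (2 * m : ℕ) b hb).comp
    tendsto_sqrt_atTop).congr' ?_
  filter_upwards [eventually_ge_atTop 0] with x hx
  rw [Function.comp_apply, rpow_natCast, pow_mul, sq_sqrt hx]

lemma tendsto_exp_mul_sub_mul_sqrt_div_atTop {ε : ℝ} (hε : 0 < ε) (b : ℝ) :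
    Tendsto (fun x : ℝ => exp (ε * x - b * √x) / x) atTop atTop := by
  refine tendsto_atTop_mono' atTop ?_
    (by simpa using tendsto_exp_mul_div_rpow_atTop 1 (ε / 2) (by positivity))
  filter_upwards [eventually_gt_atTop 0, tendsto_sqrt_atTop.eventually_ge_atTop (2 * b / ε)]
    with x hx hbx
  have hb : b * √x ≤ ε / 2 * x :=
    calc b * √x = ε / 2 * (2 * b / ε) * √x := by field_simp
      _ ≤ ε / 2 * √x * √x := by gcongr
      _ = ε / 2 * x := by rw [mul_assoc, mul_self_sqrt hx.le]
  gcongr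
  linarith

section betaJ

variable {z : ℝ} {j : ℕ}

lemma wFn_nonneg (hz : 0 ≤ z) : 0 ≤ wFn z j :=
  arcosh_one_add_nonneg (by positivity)

lemma sinh_wFn_nonneg (hz : 0 ≤ z) : 0 ≤ sinh (wFn z j) :=
  sinh_nonneg_iff.2 (wFn_nonneg hz)

lemma sinh_wFn_sq (hz : 0 ≤ z) : sinh (wFn z j) ^ 2 = z / j + (z / (2 * j)) ^ 2 := by
  rw [wFn, sinh_arcosh_one_add (by positivity), sq_sqrt (by positivity)]
  ring

lemma betaJ_le_sinh_wFn (hz : 0 ≤ z) : betaJ z j ≤ sinh (wFn z j) := by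
  have := self_le_sinh_iff.2 (wFn_nonneg (j := j) hz)
  rw [betaJ]; linarith

lemma sinh_wFn_le_two_mul_betaJ (hz : 0 ≤ z) : sinh (wFn z j) ≤ 2 * betaJ z j := by
  have := wFn_nonneg (j := j) hz
  rw [betaJ]; linarith

lemma betaJ_nonneg (hz : 0 ≤ z) : 0 ≤ betaJ z j := by
  linarith [sinh_wFn_le_two_mul_betaJ (j := j) hz, sinh_wFn_nonneg (j := j) hz]

lemma betaJ_le_sqrt (hz : 0 ≤ z) (hj : 1 ≤ j) : betaJ z j ≤ √(z + z ^ 2 / 4) := by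
  refine (betaJ_le_sinh_wFn hz).trans (le_sqrt_of_sq_le ?_)
  have hj' : (1 : ℝ) ≤ j := by exact_mod_cast hj
  rw [sinh_wFn_sq hz]
  have h1 : z / j ≤ z := div_le_self hz hj'
  have h2 : z / (2 * j) ≤ z / 2 := by gcongr; linarith
  nlinarith [div_nonneg hz (by positivity : (0:ℝ) ≤ 2 * j)]

lemma natCast_mul_sinh_wFn (hz : 0 ≤ z) (hj : j ≠ 0) :
    (j : ℝ) * sinh (wFn z j) = √(z * j + z ^ 2 / 4) := by
  have hsq : ((j : ℝ) * sinh (wFn z j)) ^ 2 = z * j + z ^ 2 / 4 := by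
    rw [mul_pow, sinh_wFn_sq hz]
    field_simp
    ring
  rw [← hsq, sqrt_sq (mul_nonneg j.cast_nonneg (sinh_wFn_nonneg hz))]

lemma sqrt_mul_sqrt_le_two_mul_betaJ (hz : 0 ≤ z) (hj : j ≠ 0) :
    √z * √j ≤ 2 * j * betaJ z j :=
  calc √z * √j = √(z * j) := (sqrt_mul hz j).symm
    _ ≤ √(z * j + z ^ 2 / 4) := sqrt_le_sqrt (by linarith [sq_nonneg z])
    _ = j * sinh (wFn z j) := (natCast_mul_sinh_wFn hz hj).symm
    _ ≤ j * (2 * betaJ z j) := by gcongr; exact sinh_wFn_le_two_mul_betaJ hz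
    _ = 2 * j * betaJ z j := by ring

lemma two_mul_betaJ_le (hz : 0 ≤ z) (hj : 1 ≤ j) :
    2 * j * betaJ z j ≤ 2 * √(z + z ^ 2 / 4) * √j := by
  have hj' : (1 : ℝ) ≤ j := by exact_mod_cast hj
  calc 2 * j * betaJ z j ≤ 2 * (j * sinh (wFn z j)) := by
        rw [mul_assoc]; gcongr; exact betaJ_le_sinh_wFn hz
    _ = 2 * √(z * j + z ^ 2 / 4) := by rw [natCast_mul_sinh_wFn hz (by omega)]
    _ ≤ 2 * √((z + z ^ 2 / 4) * j) := by gcongr; nlinarith [sq_nonneg z]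
    _ = 2 * √(z + z ^ 2 / 4) * √j := by rw [sqrt_mul (by positivity), mul_assoc]

lemma natCast_pow_mul_sqrt_betaJ_div_mul_exp_le (hz : 0 ≤ z) (hj : 1 ≤ j) (m : ℕ) :
    (j : ℝ) ^ m * √(betaJ z j / j) * exp (-2 * j * betaJ z j) ≤
      √√(z + z ^ 2 / 4) * ((j : ℝ) ^ m * exp (-√z * √j)) := by
  have hj' : (1 : ℝ) ≤ j := by exact_mod_cast hj
  have hsqrt : √(betaJ z j / j) ≤ √√(z + z ^ 2 / 4) :=
    sqrt_le_sqrt ((div_le_self (betaJ_nonneg hz) hj').trans (betaJ_le_sqrt hz hj))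
  have hexp : exp (-2 * j * betaJ z j) ≤ exp (-√z * √j) :=
    exp_le_exp.2 (by linarith [sqrt_mul_sqrt_le_two_mul_betaJ hz (j := j) (by omega)])
  calc (j : ℝ) ^ m * √(betaJ z j / j) * exp (-2 * j * betaJ z j)
      ≤ (j : ℝ) ^ m * √√(z + z ^ 2 / 4) * exp (-√z * √j) := by gcongr
    _ = √√(z + z ^ 2 / 4) * ((j : ℝ) ^ m * exp (-√z * √j)) := by ring

lemma le_exp_mul_mul_sqrt_betaJ_div_mul_exp (hz : 0 ≤ z) (hj : 1 ≤ j) (ε : ℝ) :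
    √(√z / 2) * (exp (ε * j - 2 * √(z + z ^ 2 / 4) * √j) / j) ≤
      exp (ε * j) * √(betaJ z j / j) * exp (-2 * j * betaJ z j) := by
  have hj' : (1 : ℝ) ≤ j := by exact_mod_cast hj
  have hβ : √z / (2 * j) ≤ betaJ z j := by
    have := sqrt_mul_sqrt_le_two_mul_betaJ hz (j := j) (by omega)
    rw [div_le_iff₀ (by positivity)]
    nlinarith [one_le_sqrt.2 hj', sqrt_nonneg z]
  have hsqrt : √(√z / 2) / j ≤ √(betaJ z j / j) :=
    calc √(√z / 2) / j = √(√z / (2 * j) / j) := by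
          rw [div_div, mul_assoc, ← sq, ← div_div, sqrt_div (by positivity : 0 ≤ √z / 2),
            sqrt_sq j.cast_nonneg]
      _ ≤ √(betaJ z j / j) := by gcongr
  have hexp : exp (-(2 * √(z + z ^ 2 / 4) * √j)) ≤ exp (-2 * j * betaJ z j) :=
    exp_le_exp.2 (by linarith [two_mul_betaJ_le hz hj])
  calc √(√z / 2) * (exp (ε * j - 2 * √(z + z ^ 2 / 4) * √j) / j)
      = exp (ε * j) * (√(√z / 2) / j) * exp (-(2 * √(z + z ^ 2 / 4) * √j)) := by
        rw [sub_eq_add_neg, exp_add]; ring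
    _ ≤ exp (ε * j) * √(betaJ z j / j) * exp (-2 * j * betaJ z j) := by gcongr

end betaJ

/-- For `z > 0`: `j^m √(β(j)/j) e^(-2jβ(j)) → 0` for every `m ∈ ℕ`, while
`e^(εj) √(β(j)/j) e^(-2jβ(j)) → +∞` for every `ε > 0`. -/
theorem betaJ_intermediate_decay (z : ℝ) (hz : 0 < z) :
    (∀ m : ℕ,
      Tendsto
        (fun j : ℕ => (j : ℝ) ^ m * Real.sqrt (betaJ z j / j) * Real.exp (-2 * j * betaJ z j))
        atTop (𝓝 0)) ∧
    (∀ ε : ℝ, 0 < ε →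
      Tendsto
        (fun j : ℕ =>
          Real.exp (ε * j) * Real.sqrt (betaJ z j / j) * Real.exp (-2 * j * betaJ z j))
        atTop atTop) := by
  refine ⟨fun m => ?_, fun ε hε => ?_⟩
  · have hbound := ((tendsto_pow_mul_exp_neg_mul_sqrt_atTop_nhds_zero m
      (sqrt_pos.2 hz)).comp tendsto_natCast_atTop_atTop).const_mul √√(z + z ^ 2 / 4)
    rw [mul_zero] at hbound
    refine squeeze_zero' (Eventually.of_forall fun j => by positivity) ?_ hbound
    filter_upwards [eventually_ge_atTop 1] with j hj
    exact natCast_pow_mul_sqrt_betaJ_div_mul_exp_le hz.le hj m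
  · have hbound := ((tendsto_exp_mul_sub_mul_sqrt_div_atTop hε (2 * √(z + z ^ 2 / 4))).comp
      tendsto_natCast_atTop_atTop).const_mul_atTop (sqrt_pos.2 (by positivity : 0 < √z / 2))
    refine tendsto_atTop_mono' _ ?_ hbound
    filter_upwards [eventually_ge_atTop 1] with j hj
    exact le_exp_mul_mul_sqrt_betaJ_div_mul_exp hz.le hj ε
end
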